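/- arXiv:2012.04522 — 8 statements merged into one kernel-verified Lean document; each statement's English description precedes it below -/
import Mathlib

section
/- Consider the dorm sharing instance with 3 dorms of capacity 3 and 9 agents, where for each i ∈ {1,3,5,7}, agents i and i+1 are friends (agent 9 has no friends; no other friendships), and every agent values dorm j at j for j ∈ {1,2,3}. Then no Pareto envy-free assignment exists. -/
open Finset

/-- Assignment obtained by swapping the resources of agents `i` and `j`. -/
def swapA {n m : ℕ} (X : Fin n → Fin m) (i j : Fin n) : Fin n → Fin m :=
  fun k => X (Equiv.swap i j k)

/-- External value agent `i` obtains in assignment `X`. -/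
def eVal {n m : ℕ} (e : Fin n → Fin n → ℝ) (X : Fin n → Fin m) (i : Fin n) : ℝ :=
  ∑ ℓ ∈ Finset.univ.filter (fun ℓ => ℓ ≠ i ∧ X ℓ = X i), e i ℓ

/-- Internal value agent `i` obtains in assignment `X`. -/
def vVal {n m : ℕ} (v : Fin n → Fin m → ℝ) (X : Fin n → Fin m) (i : Fin n) : ℝ :=
  v i (X i)

/-- Total utility of agent `i` in assignment `X`. -/
def util {n m : ℕ} (v : Fin n → Fin m → ℝ) (e : Fin n → Fin n → ℝ)
    (X : Fin n → Fin m) (i : Fin n) : ℝ :=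
  vVal v X i + eVal e X i

/-- Pareto envy-freeness. -/
def PEF {n m : ℕ} (v : Fin n → Fin m → ℝ) (e : Fin n → Fin n → ℝ)
    (X : Fin n → Fin m) : Prop :=
  ∀ i j : Fin n, vVal v (swapA X i j) i ≤ vVal v X i ∨ eVal e (swapA X i j) i ≤ eVal e X i

/-- Envy-freeness. -/
def EF {n m : ℕ} (v : Fin n → Fin m → ℝ) (e : Fin n → Fin n → ℝ)
    (X : Fin n → Fin m) : Prop :=
  ∀ i j : Fin n, util v e (swapA X i j) i ≤ util v e X i

/-- Proportional share of agent `i`. -/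
noncomputable def propShare {n m : ℕ} (v : Fin n → Fin m → ℝ)
    (e : Fin n → Fin n → ℝ) (i : Fin n) : ℝ :=
  (1 / (m : ℝ)) * ∑ j, v i j +
    ((n : ℝ) / (m : ℝ) - 1) * ((1 / ((n : ℝ) - 1)) * ∑ ℓ, e i ℓ)

/-- Every agent values dorm j at j (dorms indexed 1,2,3). -/
def v2 : Fin 9 → Fin 3 → ℝ := fun _ j => (j.val + 1 : ℝ)

/-- Friendships: for each i ∈ {1,3,5,7}, agents i and i+1 are friends
(indices (0,1),(2,3),(4,5),(6,7)); agent 9 (index 8) has no friends. -/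
def e2 : Fin 9 → Fin 9 → ℝ := fun i j =>
  if i ≠ j ∧ i.val < 8 ∧ j.val < 8 ∧ i.val / 2 = j.val / 2 then 1 else 0

lemma eVal_single (i f : Fin 9) (he : ∀ ℓ, e2 i ℓ = if ℓ = f then 1 else 0)
    (Y : Fin 9 → Fin 3) :
    eVal e2 Y i = if f ≠ i ∧ Y f = Y i then 1 else 0 := by
  unfold eVal
  rw [Finset.sum_congr rfl (fun ℓ _ => he ℓ), Finset.sum_ite_eq' _ f (fun _ => (1:ℝ))]
  simp [Finset.mem_filter]

lemma pair_together (X : Fin 9 → Fin 3)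
    (hb : ∀ d : Fin 3, (Finset.univ.filter (fun a => X a = d)).card = 3)
    (hp : PEF v2 e2 X) (i f : Fin 9) (hif : f ≠ i)
    (he : ∀ ℓ, e2 i ℓ = if ℓ = f then 1 else 0) :
    ¬ (X i < X f) := by
  intro hlt
  have hcard : 1 < (Finset.univ.filter (fun a => X a = X f)).card := by
    rw [hb (X f)]; norm_num
  obtain ⟨j, hjmem, hjf⟩ := Finset.exists_mem_ne hcard f
  have hXj : X j = X f := (Finset.mem_filter.mp hjmem).2
  have hji : j ≠ i := by
    intro h; rw [h] at hXj; rw [← hXj] at hlt; exact lt_irrefl _ hlt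
  rcases hp i j with h | h
  · -- vVal contradiction
    have h1 : vVal v2 (swapA X i j) i = ((X j).val + 1 : ℝ) := by
      unfold vVal swapA v2; rw [Equiv.swap_apply_left]
    have h2 : vVal v2 X i = ((X i).val + 1 : ℝ) := rfl
    rw [h1, h2] at h
    have hle : (X j).val ≤ (X i).val := by exact_mod_cast (by linarith : ((X j).val:ℝ) ≤ ((X i).val:ℝ))
    have : X f ≤ X i := by rw [Fin.le_def, ← hXj]; exact hle
    exact absurd hlt (not_lt.mpr this)
  · -- eVal contradiction
    rw [eVal_single i f he, eVal_single i f he] at h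
    have hfj : f ≠ j := fun h' => hjf h'.symm
    have hsf : swapA X i j f = X f := by
      unfold swapA; rw [Equiv.swap_apply_of_ne_of_ne hif hfj]
    have hsi : swapA X i j i = X j := by
      unfold swapA; rw [Equiv.swap_apply_left]
    rw [if_pos ⟨hif, by rw [hsf, hsi, hXj]⟩, if_neg] at h
    · linarith
    · rintro ⟨-, hXfi⟩; rw [hXfi] at hlt; exact lt_irrefl _ hlt

theorem no_pef_capacity_three :
    ¬ ∃ X : Fin 9 → Fin 3,
      (∀ d : Fin 3, (Finset.univ.filter (fun a => X a = d)).card = 3) ∧ PEF v2 e2 X := by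
  rintro ⟨X, hb, hp⟩
  have he01 : ∀ ℓ, e2 0 ℓ = if ℓ = 1 then 1 else 0 := by
    intro ℓ; fin_cases ℓ <;> simp [e2] <;> decide
  have he10 : ∀ ℓ, e2 1 ℓ = if ℓ = 0 then 1 else 0 := by
    intro ℓ; fin_cases ℓ <;> simp [e2] <;> decide
  have he23 : ∀ ℓ, e2 2 ℓ = if ℓ = 3 then 1 else 0 := by
    intro ℓ; fin_cases ℓ <;> simp [e2] <;> decide
  have he32 : ∀ ℓ, e2 3 ℓ = if ℓ = 2 then 1 else 0 := by
    intro ℓ; fin_cases ℓ <;> simp [e2] <;> decide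
  have he45 : ∀ ℓ, e2 4 ℓ = if ℓ = 5 then 1 else 0 := by
    intro ℓ; fin_cases ℓ <;> simp [e2] <;> decide
  have he54 : ∀ ℓ, e2 5 ℓ = if ℓ = 4 then 1 else 0 := by
    intro ℓ; fin_cases ℓ <;> simp [e2] <;> decide
  have he67 : ∀ ℓ, e2 6 ℓ = if ℓ = 7 then 1 else 0 := by
    intro ℓ; fin_cases ℓ <;> simp [e2] <;> decide
  have he76 : ∀ ℓ, e2 7 ℓ = if ℓ = 6 then 1 else 0 := by
    intro ℓ; fin_cases ℓ <;> simp [e2] <;> decide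
  have eqp : ∀ (a b : Fin 9), b ≠ a → a ≠ b →
      (∀ ℓ, e2 a ℓ = if ℓ = b then 1 else 0) →
      (∀ ℓ, e2 b ℓ = if ℓ = a then 1 else 0) → X a = X b := by
    intro a b hba hab hea heb
    rcases lt_trichotomy (X a) (X b) with h | h | h
    · exact absurd h (pair_together X hb hp a b hba hea)
    · exact h
    · exact absurd h (pair_together X hb hp b a hab heb)
  have h01 : X 0 = X 1 := eqp 0 1 (by decide) (by decide) he01 he10
  have h23 : X 2 = X 3 := eqp 2 3 (by decide) (by decide) he23 he32
  have h45 : X 4 = X 5 := eqp 4 5 (by decide) (by decide) he45 he54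
  have h67 : X 6 = X 7 := eqp 6 7 (by decide) (by decide) he67 he76
  -- pigeonhole: two of X 0, X 2, X 4, X 6 are equal
  have pig : ∀ a b c d : Fin 3, a = b ∨ a = c ∨ a = d ∨ b = c ∨ b = d ∨ c = d := by decide
  have card4 : ∀ (u w : Fin 9) (hsub : ({u, u+1, w, w+1} : Finset (Fin 9)).card = 4),
      X u = X (u+1) → X w = X (w+1) → X u = X w → False := by
    intro u w hc h1 h2 h3
    have hsub : ({u, u+1, w, w+1} : Finset (Fin 9)) ⊆
        Finset.univ.filter (fun a => X a = X u) := by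
      intro a ha
      simp only [Finset.mem_insert, Finset.mem_singleton] at ha
      rcases ha with rfl | rfl | rfl | rfl <;>
        simp [Finset.mem_filter, h1.symm, h2.symm, h3, ← h1, ← h2]
    have := Finset.card_le_card hsub
    rw [hc, hb (X u)] at this
    omega
  rcases pig (X 0) (X 2) (X 4) (X 6) with h | h | h | h | h | h
  · exact card4 0 2 (by decide) h01 h23 h
  · exact card4 0 4 (by decide) h01 h45 h
  · exact card4 0 6 (by decide) h01 h67 h
  · exact card4 2 4 (by decide) h23 h45 h
  · exact card4 2 6 (by decide) h23 h67 h
  · exact card4 4 6 (by decide) h45 h67 h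
end

section
/- In a resource sharing instance where every resource has capacity at least 2, any envy-free assignment X is a (1 − 1/c_min)-approximate proportional assignment: for every agent i, u_i(X) ≥ (1 − 1/c_min)·PROP_i, where c_min is the minimum resource capacity. -/
open Finset

theorem ef_implies_approx_prop {n m : ℕ} (hm : 0 < m)
    (c : Fin m → ℕ) (hc2 : ∀ j, 2 ≤ c j) (hsum : ∑ j, c j = n)
    (cmin : ℕ) (hcmin : ∀ j, cmin ≤ c j) (hcmem : ∃ j, c j = cmin)
    (v : Fin n → Fin m → ℝ) (hv : ∀ i j, 0 ≤ v i j)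
    (e : Fin n → Fin n → ℝ) (he : ∀ i ℓ, 0 ≤ e i ℓ) (hee : ∀ i, e i i = 0)
    (X : Fin n → Fin m)
    (hcap : ∀ j : Fin m, (Finset.univ.filter (fun a => X a = j)).card = c j)
    (hEF : EF v e X) :
    ∀ i, (1 - 1 / (cmin : ℝ)) * propShare v e i ≤ util v e X i := by
  intro i
  have hm0 : (0:ℝ) < m := by exact_mod_cast hm
  have hn2m : 2 * m ≤ n := by
    calc 2 * m = ∑ _j : Fin m, 2 := by simp [mul_comm]
    _ ≤ ∑ j, c j := Finset.sum_le_sum (fun j _ => hc2 j)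
    _ = n := hsum
  obtain ⟨j0, hj0⟩ := hcmem
  have hcmin2 : 2 ≤ cmin := hj0 ▸ hc2 j0
  have hcm0 : (0:ℝ) < cmin := by positivity
  have hcm2 : (2:ℝ) ≤ cmin := by exact_mod_cast hcmin2
  set α : ℝ := 1 - 1/(cmin:ℝ) with hα
  have hα0 : 0 ≤ α := by
    have : 1/(cmin:ℝ) ≤ 1 := by
      rw [div_le_one hcm0]; linarith
    rw [hα]; linarith
  have hα1 : α ≤ 1 := by
    have : 0 ≤ 1/(cmin:ℝ) := by positivity
    simp only [hα]; linarith
  set Ej : Fin m → ℝ := fun j => ∑ ℓ ∈ Finset.univ.filter (fun ℓ => X ℓ = j), e i ℓ with hEjdef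
  have hEjnn : ∀ j, 0 ≤ Ej j := fun j => Finset.sum_nonneg (fun ℓ _ => he i ℓ)
  set u : ℝ := util v e X i with hu
  -- key per-resource bound
  have key : ∀ j : Fin m, v i j + α * Ej j ≤ u := by
    intro j
    by_cases hji : j = X i
    · subst hji
      have hEeq : Ej (X i) = eVal e X i := by
        have hset : Finset.univ.filter (fun ℓ => ℓ ≠ i ∧ X ℓ = X i)
            = (Finset.univ.filter (fun ℓ => X ℓ = X i)).erase i := by
          ext ℓ
          simp [Finset.mem_erase, and_comm]
        rw [hEjdef]
        simp only [eVal, hset]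
        exact (Finset.sum_erase _ (hee i)).symm
      have : α * Ej (X i) ≤ Ej (X i) := by
        nlinarith [hEjnn (X i)]
      rw [hu]
      simp only [util, vVal]
      linarith [hEeq ▸ this]
    · -- j ≠ X i : average EF inequalities over agents in group j
      set S : Finset (Fin n) := Finset.univ.filter (fun k => X k = j) with hS
      have hcard : S.card = c j := hcap j
      have hswap : ∀ k ∈ S, util v e (swapA X i k) i = v i j + Ej j - e i k := by
        intro k hk
        have hkj : X k = j := by simpa [hS] using hk
        have hki : k ≠ i := by
          intro h; apply hji; rw [← hkj, h]
        have hXi : swapA X i k i = j := by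
          simp [swapA, Equiv.swap_apply_left, hkj]
        have hsetS : Finset.univ.filter
            (fun ℓ => ℓ ≠ i ∧ swapA X i k ℓ = swapA X i k i) = S.erase k := by
          ext ℓ
          simp only [Finset.mem_filter, Finset.mem_univ, true_and, Finset.mem_erase,
            hXi, hS]
          constructor
          · rintro ⟨hℓi, hℓ⟩
            rcases eq_or_ne ℓ k with rfl | hℓk
            · exfalso
              rw [swapA, Equiv.swap_apply_right] at hℓ
              exact hji hℓ.symm
            · rw [swapA, Equiv.swap_apply_of_ne_of_ne hℓi hℓk] at hℓ
              exact ⟨hℓk, hℓ⟩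
          · rintro ⟨hℓk, hℓ⟩
            have hℓi : ℓ ≠ i := by
              intro h; subst h; exact hji (by rw [← hℓ])
            refine ⟨hℓi, ?_⟩
            rw [swapA, Equiv.swap_apply_of_ne_of_ne hℓi hℓk]
            exact hℓ
        have hevals : eVal e (swapA X i k) i = Ej j - e i k := by
          rw [eVal, hsetS, Finset.sum_erase_eq_sub hk]
        rw [util, vVal, hXi, hevals]
        ring
      have hsum1 : ∑ k ∈ S, util v e (swapA X i k) i
          = (c j : ℝ) * (v i j + Ej j) - Ej j := by
        rw [Finset.sum_congr rfl hswap]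
        have hEjsum : ∑ k ∈ S, e i k = Ej j := rfl
        rw [Finset.sum_sub_distrib, Finset.sum_const, hcard, hEjsum, nsmul_eq_mul]
      have hsum2 : ∑ k ∈ S, util v e (swapA X i k) i ≤ (c j : ℝ) * u := by
        calc ∑ k ∈ S, util v e (swapA X i k) i ≤ ∑ _k ∈ S, u :=
              Finset.sum_le_sum (fun k _ => hEF i k)
        _ = (c j : ℝ) * u := by rw [Finset.sum_const, hcard, nsmul_eq_mul]
      have hineq : (c j : ℝ) * (v i j) + ((c j : ℝ) - 1) * Ej j ≤ (c j : ℝ) * u := by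
        nlinarith [hsum1 ▸ hsum2]
      have hcj : (cmin:ℝ) ≤ (c j : ℝ) := by exact_mod_cast hcmin j
      have hcj0 : (0:ℝ) < (c j : ℝ) := by linarith
      have hcd : 1 ≤ (c j : ℝ) * (1/(cmin:ℝ)) := by
        rw [mul_one_div, le_div_iff₀ hcm0, one_mul]
        exact hcj
      have h3 : Ej j ≤ (c j : ℝ) * (1/(cmin:ℝ)) * Ej j :=
        le_mul_of_one_le_left (hEjnn j) hcd
      have h2 : (c j : ℝ) * (v i j + α * Ej j) ≤ (c j : ℝ) * u := by
        have : (c j : ℝ) * (v i j + α * Ej j)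
            = (c j : ℝ) * (v i j) + (c j : ℝ) * Ej j - (c j : ℝ) * (1/(cmin:ℝ)) * Ej j := by
          rw [hα]; ring
        rw [this]
        linarith
      exact le_of_mul_le_mul_left h2 hcj0
  -- sum over resources
  have hfib : ∑ j, Ej j = ∑ ℓ, e i ℓ :=
    Finset.sum_fiberwise_of_maps_to (fun x _ => Finset.mem_univ (X x)) (e i)
  have hsumkey : ∑ j, v i j + α * ∑ ℓ, e i ℓ ≤ (m:ℝ) * u := by
    have := Finset.sum_le_sum (fun j (_ : j ∈ (Finset.univ : Finset (Fin m))) => key j)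
    rw [Finset.sum_add_distrib, Finset.sum_const, ← Finset.mul_sum, hfib] at this
    simpa [Finset.card_univ, nsmul_eq_mul] using this
  -- final arithmetic
  have hVnn : 0 ≤ ∑ j, v i j := Finset.sum_nonneg (fun j _ => hv i j)
  have hEnn : 0 ≤ ∑ ℓ, e i ℓ := Finset.sum_nonneg (fun ℓ _ => he i ℓ)
  have hM1 : (1:ℝ) ≤ m := by exact_mod_cast hm
  have hNcast : 2 * (m:ℝ) ≤ n := by exact_mod_cast hn2m
  have hN1 : (1:ℝ) ≤ (n:ℝ) - 1 := by linarith
  have hc0 : ((n:ℝ)/(m:ℝ) - 1) * (1/((n:ℝ)-1)) ≤ 1/(m:ℝ) := by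
    rw [div_sub_one hm0.ne', div_mul_div_comm, mul_one, div_le_div_iff₀ (by positivity) hm0]
    nlinarith
  have t1 : α * ((1/(m:ℝ)) * ∑ j, v i j) ≤ (1/(m:ℝ)) * ∑ j, v i j :=
    mul_le_of_le_one_left (mul_nonneg (by positivity) hVnn) hα1
  have t2 : α * (((n:ℝ)/(m:ℝ) - 1) * ((1/((n:ℝ)-1)) * ∑ ℓ, e i ℓ))
      ≤ α * ((1/(m:ℝ)) * ∑ ℓ, e i ℓ) := by
    apply mul_le_mul_of_nonneg_left _ hα0
    calc ((n:ℝ)/(m:ℝ) - 1) * ((1/((n:ℝ)-1)) * ∑ ℓ, e i ℓ)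
        = (((n:ℝ)/(m:ℝ) - 1) * (1/((n:ℝ)-1))) * ∑ ℓ, e i ℓ := by ring
    _ ≤ (1/(m:ℝ)) * ∑ ℓ, e i ℓ := mul_le_mul_of_nonneg_right hc0 hEnn
  have hfin : (1/(m:ℝ)) * (∑ j, v i j + α * ∑ ℓ, e i ℓ) ≤ u := by
    have h4 : (1/(m:ℝ)) * (∑ j, v i j + α * ∑ ℓ, e i ℓ) ≤ (1/(m:ℝ)) * ((m:ℝ) * u) :=
      mul_le_mul_of_nonneg_left hsumkey (by positivity)
    calc (1/(m:ℝ)) * (∑ j, v i j + α * ∑ ℓ, e i ℓ) ≤ (1/(m:ℝ)) * ((m:ℝ) * u) := h4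
    _ = u := by field_simp
  calc α * propShare v e i
      = α * ((1/(m:ℝ)) * ∑ j, v i j)
        + α * (((n:ℝ)/(m:ℝ) - 1) * ((1/((n:ℝ)-1)) * ∑ ℓ, e i ℓ)) := by
        rw [propShare]; ring
  _ ≤ (1/(m:ℝ)) * ∑ j, v i j + α * ((1/(m:ℝ)) * ∑ ℓ, e i ℓ) := by linarith
  _ = (1/(m:ℝ)) * (∑ j, v i j + α * ∑ ℓ, e i ℓ) := by ring
  _ ≤ u := hfin
end

section
/- In a resource sharing instance where every resource has the same capacity c ≥ 2, any envy-free assignment X is a (1 − 1/n)-approximate proportional assignment: for every agent i, u_i(X) ≥ ((n−1)/n)·PROP_i. -/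
open Finset

theorem ef_implies_approx_prop_identical {n m c : ℕ} (hm : 0 < m)
    (hc : 2 ≤ c) (hn : n = c * m)
    (v : Fin n → Fin m → ℝ) (hv : ∀ i j, 0 ≤ v i j)
    (e : Fin n → Fin n → ℝ) (he : ∀ i ℓ, 0 ≤ e i ℓ) (hee : ∀ i, e i i = 0)
    (X : Fin n → Fin m)
    (hcap : ∀ j : Fin m, (Finset.univ.filter (fun a => X a = j)).card = c)
    (hEF : EF v e X) :
    ∀ i, (((n : ℝ) - 1) / (n : ℝ)) * propShare v e i ≤ util v e X i := by
  intro i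
  have hn2 : 2 ≤ n := by
    rw [hn]
    calc 2 ≤ c := hc
      _ ≤ c * m := Nat.le_mul_of_pos_right _ hm
  have hmR : (0:ℝ) < (m:ℝ) := by exact_mod_cast hm
  have hnR : (0:ℝ) < (n:ℝ) := by
    have : 0 < n := by omega
    exact_mod_cast this
  have hn1R : (0:ℝ) < (n:ℝ) - 1 := by
    have : (2:ℝ) ≤ (n:ℝ) := by exact_mod_cast hn2
    linarith
  have hnm : (n:ℝ) = (c:ℝ) * (m:ℝ) := by rw [hn]; push_cast; ring
  have hcR : (2:ℝ) ≤ (c:ℝ) := by exact_mod_cast hc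
  -- internal-value sum
  have hA : ∑ j, v i (X j) = (c:ℝ) * ∑ r, v i r := by
    rw [← Finset.sum_fiberwise Finset.univ X (fun j => v i (X j)), Finset.mul_sum]
    refine Finset.sum_congr rfl fun r _ => ?_
    have h1 : ∑ j ∈ Finset.univ.filter (fun j => X j = r), v i (X j)
        = ∑ _j ∈ Finset.univ.filter (fun j => X j = r), v i r := by
      refine Finset.sum_congr rfl fun j hj => ?_
      rw [Finset.mem_filter] at hj
      rw [hj.2]
    rw [h1, Finset.sum_const, hcap r, nsmul_eq_mul]
  -- external-value sum
  have hB : ∑ j, eVal e (swapA X i j) i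
      = ((c:ℝ) - 1) * (∑ ℓ, e i ℓ) + eVal e X i := by
    have hswap : ∀ j, eVal e (swapA X i j) i
        = ∑ ℓ, if ℓ ≠ i ∧ swapA X i j ℓ = swapA X i j i then e i ℓ else 0 := fun j => by
      rw [eVal, Finset.sum_filter]
    rw [Finset.sum_congr rfl fun j _ => hswap j, Finset.sum_comm]
    have hl : ∀ ℓ : Fin n,
        (∑ j, if ℓ ≠ i ∧ swapA X i j ℓ = swapA X i j i then e i ℓ else 0)
        = ((c:ℝ) - 1) * e i ℓ + (if ℓ ≠ i ∧ X ℓ = X i then e i ℓ else 0) := by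
      intro ℓ
      by_cases hli : ℓ = i
      · subst hli
        simp [hee ℓ]
      · have h1 : ∀ j, (if ℓ ≠ i ∧ swapA X i j ℓ = swapA X i j i then e i ℓ else 0)
            = if swapA X i j ℓ = swapA X i j i then e i ℓ else 0 := fun j => by
          simp [hli]
        rw [Finset.sum_congr rfl fun j _ => h1 j,
          ← Finset.sum_erase_add Finset.univ _ (Finset.mem_univ ℓ)]
      -- term at j = ℓ
        have hterm : (if swapA X i ℓ ℓ = swapA X i ℓ i then e i ℓ else 0)
            = (if ℓ ≠ i ∧ X ℓ = X i then e i ℓ else 0) := by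
          simp only [swapA, Equiv.swap_apply_right, Equiv.swap_apply_left]
          by_cases h : X ℓ = X i
          · simp [h, hli]
          · rw [if_neg (fun hh => h hh.symm), if_neg (by simp [hli, h])]
        have hrest : ∑ j ∈ Finset.univ.erase ℓ,
            (if swapA X i j ℓ = swapA X i j i then e i ℓ else 0)
            = ((c:ℝ) - 1) * e i ℓ := by
          have h2 : ∀ j ∈ Finset.univ.erase ℓ,
              (if swapA X i j ℓ = swapA X i j i then e i ℓ else 0)
              = if X j = X ℓ then e i ℓ else 0 := by
            intro j hj
            have hjl : j ≠ ℓ := (Finset.mem_erase.mp hj).1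
            simp only [swapA, Equiv.swap_apply_left]
            rw [Equiv.swap_apply_of_ne_of_ne hli (Ne.symm hjl)]
            by_cases h : X j = X ℓ
            · rw [if_pos h.symm, if_pos h]
            · rw [if_neg (fun hh => h hh.symm), if_neg h]
          rw [Finset.sum_congr rfl h2, ← Finset.sum_filter]
          have h3 : (Finset.univ.erase ℓ).filter (fun j => X j = X ℓ)
              = (Finset.univ.filter (fun j => X j = X ℓ)).erase ℓ := by
            rw [Finset.filter_erase]
          rw [h3, Finset.sum_const, Finset.card_erase_of_mem (by simp), hcap (X ℓ),
            nsmul_eq_mul, Nat.cast_sub (by omega), Nat.cast_one]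
        rw [hterm, hrest]
    rw [Finset.sum_congr rfl fun ℓ _ => hl ℓ, Finset.sum_add_distrib, ← Finset.mul_sum,
      ← Finset.sum_filter]
    rfl
  -- the EF sum inequality
  have hexp : ∑ j, util v e (swapA X i j) i
      = (c:ℝ) * (∑ r, v i r) + (((c:ℝ) - 1) * (∑ ℓ, e i ℓ) + eVal e X i) := by
    have h1 : ∀ j : Fin n, vVal v (swapA X i j) i = v i (X j) := fun j => by
      rw [vVal, swapA, Equiv.swap_apply_left]
    have h2 : ∑ j, vVal v (swapA X i j) i = (c:ℝ) * ∑ r, v i r := by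
      rw [Finset.sum_congr rfl fun j _ => h1 j, hA]
    simp only [util]
    rw [Finset.sum_add_distrib, h2, hB]
  have hsum : ∑ j, util v e (swapA X i j) i ≤ (n:ℝ) * util v e X i := by
    calc ∑ j, util v e (swapA X i j) i ≤ ∑ _j : Fin n, util v e X i :=
          Finset.sum_le_sum fun j _ => hEF i j
      _ = (n:ℝ) * util v e X i := by
          rw [Finset.sum_const, Finset.card_univ, Fintype.card_fin, nsmul_eq_mul]
  have hE0 : 0 ≤ eVal e X i := Finset.sum_nonneg fun ℓ _ => he i ℓ
  have hSv : 0 ≤ ∑ r, v i r := Finset.sum_nonneg fun r _ => hv i r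
  have hSe : 0 ≤ ∑ ℓ, e i ℓ := Finset.sum_nonneg fun ℓ _ => he i ℓ
  have hu : (c:ℝ) * (∑ r, v i r) + ((c:ℝ) - 1) * (∑ ℓ, e i ℓ) ≤ (n:ℝ) * util v e X i := by
    rw [hexp] at hsum; linarith
  -- final algebra
  rw [propShare]
  rw [div_mul_eq_mul_div, div_le_iff₀ hnR]
  have hps : (n:ℝ) / (m:ℝ) - 1 = (c:ℝ) - 1 := by
    rw [hnm, mul_div_assoc, div_self (ne_of_gt hmR), mul_one]
  rw [hps]
  have hinv : ((n:ℝ) - 1) * (1 / ((n:ℝ) - 1)) = 1 := by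
    field_simp
  set Sv := ∑ r, v i r
  set Se := ∑ ℓ, e i ℓ
  have key : ((n:ℝ) - 1) * ((1 / (m:ℝ)) * Sv + ((c:ℝ) - 1) * ((1 / ((n:ℝ) - 1)) * Se))
      = ((n:ℝ) - 1) / (m:ℝ) * Sv + ((c:ℝ) - 1) * Se := by
    field_simp
  rw [key]
  have h4 : ((n:ℝ) - 1) / (m:ℝ) * Sv ≤ (c:ℝ) * Sv := by
    apply mul_le_mul_of_nonneg_right _ hSv
    rw [div_le_iff₀ hmR, ← hnm]
    linarith
  calc ((n:ℝ) - 1) / (m:ℝ) * Sv + ((c:ℝ) - 1) * Se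
      ≤ (c:ℝ) * Sv + ((c:ℝ) - 1) * Se := by linarith
    _ ≤ (n:ℝ) * util v e X i := hu
    _ = util v e X i * (n:ℝ) := mul_comm _ _
end

section
/- In an envy-free assignment X of a resource sharing instance, for any agent i and any resource j ≠ r_i(X), summing the envy-freeness inequalities over all agents assigned to j yields u_i(X) ≥ v_{ij} + (1 − 1/c_j)·Σ_{ℓ ∈ X_j} e_{iℓ}. -/
open Finset

theorem ef_summed_inequality {n m : ℕ}
    (c : Fin m → ℕ) (hc1 : ∀ j, 1 ≤ c j)
    (v : Fin n → Fin m → ℝ) (hv : ∀ i j, 0 ≤ v i j)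
    (e : Fin n → Fin n → ℝ) (he : ∀ i ℓ, 0 ≤ e i ℓ) (hee : ∀ i, e i i = 0)
    (X : Fin n → Fin m)
    (hcap : ∀ j : Fin m, (Finset.univ.filter (fun a => X a = j)).card = c j)
    (hEF : EF v e X) (i : Fin n) (j : Fin m) (hj : j ≠ X i) :
    v i j + (1 - 1 / (c j : ℝ)) * ∑ ℓ ∈ Finset.univ.filter (fun a => X a = j), e i ℓ
      ≤ util v e X i := by
  classical
  set T := Finset.univ.filter (fun a => X a = j) with hT
  set S := ∑ ℓ ∈ T, e i ℓ with hS
  have hcT : (T.card : ℝ) = (c j : ℝ) := by rw [hT]; exact_mod_cast hcap j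
  have hcpos : (0:ℝ) < (c j : ℝ) := by exact_mod_cast hc1 j
  have key : ∀ i' ∈ T, v i j + S ≤ util v e X i + e i i' := by
    intro i' hi'
    have hXi' : X i' = j := (Finset.mem_filter.mp hi').2
    have hsw_i : swapA X i i' i = j := by simp [swapA, hXi']
    have hsw_i' : swapA X i i' i' = X i := by simp [swapA]
    have hsw : ∀ ℓ, ℓ ≠ i → ℓ ≠ i' → swapA X i i' ℓ = X ℓ := by
      intro ℓ h1 h2; simp [swapA, Equiv.swap_apply_of_ne_of_ne h1 h2]
    have hset : Finset.univ.filter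
        (fun ℓ => ℓ ≠ i ∧ swapA X i i' ℓ = swapA X i i' i) = T.erase i' := by
      ext ℓ
      simp only [hT, Finset.mem_filter, Finset.mem_univ, true_and,
        Finset.mem_erase, hsw_i]
      constructor
      · rintro ⟨h1, h2⟩
        by_cases h3 : ℓ = i'
        · subst h3; rw [hsw_i'] at h2; exact absurd h2.symm hj
        · rw [hsw ℓ h1 h3] at h2; exact ⟨h3, h2⟩
      · rintro ⟨h3, h2⟩
        have h1 : ℓ ≠ i := by rintro rfl; exact hj h2.symm
        exact ⟨h1, by rw [hsw ℓ h1 h3]; exact h2⟩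
    have h2 : eVal e (swapA X i i') i = S - e i i' := by
      rw [eVal, hset, hS, Finset.sum_erase_eq_sub hi']
    have h1 : vVal v (swapA X i i') i = v i j := by
      rw [vVal, hsw_i]
    have := hEF i i'
    rw [util, h1, h2] at this
    linarith
  have hsum : (T.card : ℝ) * (v i j + S) ≤ (T.card : ℝ) * util v e X i + S := by
    have h := Finset.sum_le_sum key
    rw [Finset.sum_const, Finset.sum_add_distrib, Finset.sum_const, ← hS,
      nsmul_eq_mul, nsmul_eq_mul] at h
    exact h
  rw [hcT] at hsum
  have heq : v i j + (1 - 1 / (c j : ℝ)) * S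
      = ((c j : ℝ) * (v i j + S) - S) / (c j : ℝ) := by
    field_simp; ring
  rw [heq, div_le_iff₀ hcpos]
  linarith
end

section
/- Consider the dorm sharing instance with 3 dorms of capacity 3 and 9 agents where agents 1–4 are pairwise friends, agents 5 and 6 are friends, agents 7,8,9 are pairwise friends, and every agent values dorm j at j. The assignment X = ({1,2,3}, {4,5,6}, {7,8,9}) is Pareto envy-free, and agent 4 has e_4(X) = 0 < round((c−1)/(n−1)·Σ_ℓ e_{4ℓ}) = 1 and |{j : v_{4,r_4(X)} ≥ v_{4j}}| = 2 ≥ 3/2, but v_4(X) = 2 < 3 = max dorm value; in particular, X is PEF but agent 4's external share condition e_4(X) ≥ round((c−1)/(n−1)·Σ_ℓ e_{4ℓ}) fails while agent 4 also fails to get her most-preferred dorm. -/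
open Finset

/-- Nearest-integer rounding (halves rounded up). -/
noncomputable def myRound (x : ℝ) : ℤ := ⌊x + 1 / 2⌋

/-- Every agent values dorm j at j (dorms indexed 1,2,3). -/
def v15 : Fin 9 → Fin 3 → ℝ := fun _ j => (j.val + 1 : ℝ)

/-- Friendships: clique on agents 1,2,3,4 (indices 0–3), edge {5,6} (indices 4,5),
triangle {7,8,9} (indices 6–8). -/
def e15 : Fin 9 → Fin 9 → ℝ := fun i j =>
  if i ≠ j ∧ ((i.val < 4 ∧ j.val < 4) ∨
      ((i.val = 4 ∨ i.val = 5) ∧ (j.val = 4 ∨ j.val = 5)) ∨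
      (6 ≤ i.val ∧ 6 ≤ j.val)) then 1 else 0

/-- The assignment X = ({1,2,3}, {4,5,6}, {7,8,9}). -/
def X15 : Fin 9 → Fin 3 := fun a => ⟨a.val / 3, by omega⟩


def eN : Fin 9 → Fin 9 → ℕ := fun i j =>
  if i ≠ j ∧ ((i.val < 4 ∧ j.val < 4) ∨
      ((i.val = 4 ∨ i.val = 5) ∧ (j.val = 4 ∨ j.val = 5)) ∨
      (6 ≤ i.val ∧ 6 ≤ j.val)) then 1 else 0

lemma e15_cast (i j : Fin 9) : e15 i j = (eN i j : ℝ) := by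
  simp only [e15, eN]; split <;> simp

lemma eVal_cast (X : Fin 9 → Fin 3) (i : Fin 9) :
    eVal e15 X i =
      ((∑ ℓ ∈ Finset.univ.filter (fun ℓ => ℓ ≠ i ∧ X ℓ = X i), eN i ℓ : ℕ) : ℝ) := by
  simp [eVal, e15_cast]

lemma key : ∀ i j : Fin 9,
    (swapA X15 i j i).val ≤ (X15 i).val ∨
    (∑ ℓ ∈ Finset.univ.filter (fun ℓ => ℓ ≠ i ∧ swapA X15 i j ℓ = swapA X15 i j i), eN i ℓ)
      ≤ ∑ ℓ ∈ Finset.univ.filter (fun ℓ => ℓ ≠ i ∧ X15 ℓ = X15 i), eN i ℓ := by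
  decide

theorem pef_but_agent4_fails_pprop :
    PEF v15 e15 X15 ∧
    eVal e15 X15 3 = 0 ∧
    myRound ((((3 : ℝ) - 1) / ((9 : ℝ) - 1)) * ∑ ℓ, e15 3 ℓ) = 1 ∧
    (Finset.univ.filter (fun j : Fin 3 => v15 3 j ≤ v15 3 (X15 3))).card = 2 ∧
    vVal v15 X15 3 = 2 ∧ vVal v15 X15 3 < 3 := by
  refine ⟨?_, ?_, ?_, ?_, ?_, ?_⟩
  · intro i j
    rcases key i j with h | h
    · left
      simp only [vVal, v15]
      exact_mod_cast Nat.add_le_add_right h 1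
    · right
      rw [eVal_cast, eVal_cast]
      exact_mod_cast h
  · rw [eVal_cast]
    norm_cast
  · have hs : (∑ ℓ, e15 3 ℓ) = ((∑ ℓ, eN 3 ℓ : ℕ) : ℝ) := by simp [e15_cast]
    have : (∑ ℓ, eN 3 ℓ) = 3 := by decide
    rw [hs, this]
    have : (((3:ℝ) - 1) / ((9:ℝ) - 1)) * ((3:ℕ):ℝ) + 1/2 = 5/4 := by norm_num
    unfold myRound
    rw [this]
    norm_num [Int.floor_eq_iff]
  · have h : Finset.univ.filter (fun j : Fin 3 => v15 3 j ≤ v15 3 (X15 3)) = {0, 1} := by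
      ext j
      rw [show X15 3 = 1 from by decide]
      fin_cases j <;> simp [v15]
    rw [h]; rfl
  · rw [vVal, show X15 3 = 1 from by decide]; norm_num [v15]
  · rw [vVal, show X15 3 = 1 from by decide]; norm_num [v15]
end

section
/- Tightness example for Proposition on identical capacities: in the instance with m resources each of capacity c ≥ 2 and n = cm agents, where agent 1 is assigned to resource 1, v_{11} = c−1, v_{1j} = 0 for j > 1, e_{1ℓ} = 0 for ℓ in resource 1 and e_{1ℓ} = 1 otherwise, the given assignment X is envy-free for agent 1 (no swap increases her utility), u_1(X) = c − 1, and PROP_1 = u_1(X)·(n² − c)/(n² − n). -/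
open Finset

/-!
Agent `i0` values her own resource at `c - 1` and nobody she currently shares it with, while
every other agent is worth `1` to her. Swapping with an agent `j` on her own resource changes
nothing; swapping with an agent `j` elsewhere loses the value `c - 1` of the resource but gains
exactly the `c - 1` companions of `j`. So she does not envy anyone, her utility is `c - 1`, and her
proportional share `(c - 1)/m + (c - 1)(n - c)/(n - 1)` simplifies to `(c - 1)(n² - c)/(n² - n)`.
-/

section Assignment

variable {n m : ℕ} (X : Fin n → Fin m)

theorem swapA_apply_left (i j : Fin n) : swapA X i j i = X j := by
  simp [swapA]

theorem swapA_apply_of_ne_of_ne {i j k : Fin n} (hki : k ≠ i) (hkj : k ≠ j) :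
    swapA X i j k = X k := by
  simp [swapA, Equiv.swap_apply_of_ne_of_ne hki hkj]

theorem swapA_eq_self_of_apply_eq {i j : Fin n} (h : X i = X j) : swapA X i j = X := by
  funext k
  rcases eq_or_ne k i with rfl | hki
  · simp [swapA, h]
  rcases eq_or_ne k j with rfl | hkj
  · simp [swapA, h]
  exact swapA_apply_of_ne_of_ne X hki hkj

theorem filter_swapA_eq_erase {i j : Fin n} (hij : X j ≠ X i) :
    univ.filter (fun ℓ => ℓ ≠ i ∧ swapA X i j ℓ = swapA X i j i) =
      (univ.filter (fun ℓ => X ℓ = X j)).erase j := by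
  ext ℓ
  simp only [mem_filter, mem_erase, mem_univ, true_and, swapA_apply_left]
  rcases eq_or_ne ℓ j with rfl | hℓj
  · simp [swapA, Ne.symm hij]
  rcases eq_or_ne ℓ i with rfl | hℓi
  · simp [hij.symm, hℓj]
  simp [swapA_apply_of_ne_of_ne X hℓi hℓj, hℓi, hℓj]

theorem eVal_eq_zero_of_forall {e : Fin n → Fin n → ℝ} {i : Fin n}
    (he : ∀ ℓ, X ℓ = X i → e i ℓ = 0) : eVal e X i = 0 :=
  sum_eq_zero fun ℓ hℓ => he ℓ (mem_filter.mp hℓ).2.2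

theorem eVal_swapA_of_ne {e : Fin n → Fin n → ℝ} {i j : Fin n} (hij : X j ≠ X i)
    (he : ∀ ℓ, X ℓ = X j → e i ℓ = 1) :
    eVal e (swapA X i j) i = ((univ.filter (fun ℓ => X ℓ = X j)).card : ℝ) - 1 := by
  have hj : j ∈ univ.filter (fun ℓ => X ℓ = X j) := by simp
  rw [eVal, filter_swapA_eq_erase X hij,
    sum_congr rfl fun ℓ hℓ => he ℓ (mem_filter.mp (mem_of_mem_erase hℓ)).2,
    sum_const, card_erase_of_mem hj, nsmul_one, Nat.cast_sub (card_pos.mpr ⟨j, hj⟩),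
    Nat.cast_one]

theorem sum_eq_card_sub_card_filter {e : Fin n → ℝ} {j0 : Fin m}
    (he0 : ∀ ℓ, X ℓ = j0 → e ℓ = 0) (he1 : ∀ ℓ, X ℓ ≠ j0 → e ℓ = 1) :
    ∑ ℓ, e ℓ = n - ((univ.filter (fun ℓ => X ℓ = j0)).card : ℝ) := by
  have he : ∀ ℓ, e ℓ = if X ℓ ≠ j0 then 1 else 0 := fun ℓ => by
    split_ifs with h
    exacts [he1 ℓ h, he0 ℓ (not_not.mp h)]
  rw [sum_congr rfl fun ℓ _ => he ℓ, sum_boole, filter_not,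
    card_sdiff_of_subset (filter_subset _ _), card_univ, Fintype.card_fin,
    Nat.cast_sub (card_le_univ _ |>.trans_eq (Fintype.card_fin n))]

end Assignment

theorem propShare_formula {c m : ℝ} (hc : c ≠ 0) (hm : m ≠ 0) (hcm : c * m ≠ 1) :
    1 / m * (c - 1) + (c * m / m - 1) * (1 / (c * m - 1) * (c * m - c)) =
      (c - 1) * (((c * m) ^ 2 - c) / ((c * m) ^ 2 - c * m)) := by
  have hcm' : m * c - 1 ≠ 0 := sub_ne_zero.mpr (mul_comm c m ▸ hcm)
  rw [mul_div_cancel_right₀ c hm, show (c * m) ^ 2 - c * m = c * m * (c * m - 1) by ring]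
  field_simp
  ring

theorem tightness_identical_capacities {m c : ℕ} (hm : 0 < m) (hc : 2 ≤ c)
    (v : Fin (c * m) → Fin m → ℝ) (e : Fin (c * m) → Fin (c * m) → ℝ)
    (X : Fin (c * m) → Fin m)
    (hcap : ∀ j : Fin m, (Finset.univ.filter (fun a => X a = j)).card = c)
    (i0 : Fin (c * m)) (j0 : Fin m) (hX0 : X i0 = j0)
    (hv1 : v i0 j0 = (c : ℝ) - 1) (hv0 : ∀ j ≠ j0, v i0 j = 0)
    (he0 : ∀ ℓ, X ℓ = j0 → e i0 ℓ = 0)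
    (he1 : ∀ ℓ, X ℓ ≠ j0 → e i0 ℓ = 1) :
    (∀ j, util v e (swapA X i0 j) i0 ≤ util v e X i0) ∧
    util v e X i0 = (c : ℝ) - 1 ∧
    propShare v e i0 =
      ((c : ℝ) - 1) * ((((c * m : ℕ) : ℝ) ^ 2 - c) / (((c * m : ℕ) : ℝ) ^ 2 - ((c * m : ℕ) : ℝ))) := by
  subst hX0
  have hutil : util v e X i0 = (c : ℝ) - 1 := by
    rw [util, vVal, eVal_eq_zero_of_forall X he0, hv1, add_zero]
  refine ⟨fun j => ?_, hutil, ?_⟩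
  · rcases eq_or_ne (X j) (X i0) with hj | hj
    · rw [swapA_eq_self_of_apply_eq X hj.symm]
    rw [util, vVal, swapA_apply_left, hv0 _ hj,
      eVal_swapA_of_ne X hj fun ℓ hℓ => he1 ℓ (hℓ ▸ hj), hcap, hutil, zero_add]
  · have hsum_v : ∑ j, v i0 j = (c : ℝ) - 1 := by
      rw [sum_eq_single (X i0) (fun j _ hj => hv0 j hj) (by simp), hv1]
    have hsum_e : ∑ ℓ, e i0 ℓ = (c : ℝ) * m - c := by
      rw [sum_eq_card_sub_card_filter X he0 he1, hcap, Nat.cast_mul]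
    rw [propShare, hsum_v, hsum_e, Nat.cast_mul]
    have hcm : 1 < c * m := (Nat.one_lt_two.trans_le hc).trans_le (Nat.le_mul_of_pos_right c hm)
    exact propShare_formula (by positivity) (by positivity) (by exact_mod_cast hcm.ne')
end

section
/- If in a dorm assignment X with capacity-2 dorms, for every agent i, either there exists a friend of i in i's dorm, or for every friend ℓ of i, v_{i,r_i(X)} ≥ v_{i,r_ℓ(X)}, then X is Pareto envy-free. -/
open Finset

theorem pef_of_friend_or_preferred {m : ℕ} (v : Fin (2 * m) → Fin m → ℝ)
    (e : Fin (2 * m) → Fin (2 * m) → ℝ)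
    (hbin : ∀ i j, e i j = 0 ∨ e i j = 1) (hsym : ∀ i j, e i j = e j i)
    (hee : ∀ i, e i i = 0)
    (X : Fin (2 * m) → Fin m)
    (hcap : ∀ d : Fin m, (Finset.univ.filter (fun a => X a = d)).card = 2)
    (h : ∀ i : Fin (2 * m),
      (∃ ℓ, ℓ ≠ i ∧ X ℓ = X i ∧ e i ℓ = 1) ∨
      (∀ ℓ, e i ℓ = 1 → v i (X ℓ) ≤ v i (X i))) :
    PEF v e X := by
  intro i j
  by_cases hij : j = i
  · left; subst hij; simp [vVal, swapA]
  rcases h i with ⟨ℓ, hℓi, hℓX, hℓe⟩ | h2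
  · -- i shares dorm with friend ℓ: eVal X i ≥ 1, eVal swap ≤ 1
    right
    have hge : (1 : ℝ) ≤ eVal e X i := by
      have hmem : ℓ ∈ Finset.univ.filter (fun k => k ≠ i ∧ X k = X i) := by
        simp [hℓi, hℓX]
      calc (1:ℝ) = e i ℓ := hℓe.symm
        _ ≤ _ := Finset.single_le_sum (f := fun k => e i k)
            (fun k _ => by rcases hbin i k with h' | h' <;> simp [h']) hmem
    have key : eVal e (swapA X i j) i ≤ 1 := by
      set S := Finset.univ.filter (fun k => k ≠ i ∧ swapA X i j k = swapA X i j i) with hS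
      set T := Finset.univ.filter (fun k => swapA X i j k = swapA X i j i) with hT
      have hTeq : T = (Finset.univ.filter
          (fun a => X a = X (Equiv.swap i j i))).map (Equiv.swap i j).toEmbedding := by
        ext k
        simp only [hT, Finset.mem_filter, Finset.mem_map, Equiv.coe_toEmbedding,
          Finset.mem_univ, true_and, swapA]
        constructor
        · intro hk
          exact ⟨Equiv.swap i j k, by simpa using hk, by simp⟩
        · rintro ⟨a, ha, rfl⟩
          simpa using ha
      have hTcard : T.card = 2 := by
        rw [hTeq, Finset.card_map]; exact hcap _
      have hiT : i ∈ T := by simp [hT]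
      have hsub : S ⊆ T \ {i} := by
        intro k hk
        simp only [hS, hT, Finset.mem_filter, Finset.mem_sdiff, Finset.mem_singleton,
          Finset.mem_univ, true_and] at *
        tauto
      have hScard : S.card ≤ 1 := by
        have := Finset.card_le_card hsub
        rw [Finset.card_sdiff_of_subset (by simpa using hiT), hTcard] at this
        simpa using this
      have hsum : eVal e (swapA X i j) i ≤ S.card • (1:ℝ) := by
        apply Finset.sum_le_card_nsmul
        intro k _
        rcases hbin i k with h' | h' <;> simp [h']
      calc eVal e (swapA X i j) i ≤ S.card • (1:ℝ) := hsum
        _ ≤ 1 • (1:ℝ) := by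
            apply nsmul_le_nsmul_left (by norm_num) hScard
        _ = 1 := by simp
    linarith
  · -- i weakly prefers own dorm to any friend's dorm
    by_cases hex : ∃ k, (k ≠ i ∧ swapA X i j k = swapA X i j i) ∧ e i k = 1
    · left
      obtain ⟨k, ⟨hki, hkX⟩, hke⟩ := hex
      by_cases hkj : k = j
      · rw [hkj] at hkX
        have hXij : X i = X j := by
          simpa [swapA, Equiv.swap_apply_left, Equiv.swap_apply_right] using hkX
        simp [vVal, swapA, Equiv.swap_apply_left, ← hXij]
      · have hks : swapA X i j k = X k := by
          simp [swapA, Equiv.swap_apply_of_ne_of_ne hki hkj]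
        have hXk : X k = X j := by
          rw [← hks, hkX]; simp [swapA, Equiv.swap_apply_left]
        have := h2 k hke
        rw [hXk] at this
        simpa [vVal, swapA, Equiv.swap_apply_left] using this
    · right
      push_neg at hex
      have h0 : eVal e (swapA X i j) i = 0 := by
        apply Finset.sum_eq_zero
        intro k hk
        simp only [Finset.mem_filter, Finset.mem_univ, true_and] at hk
        rcases hbin i k with h0 | h1
        · exact h0
        · exact absurd h1 (hex k hk)
      have : (0:ℝ) ≤ eVal e X i := by
        apply Finset.sum_nonneg
        intro k _
        rcases hbin i k with h' | h' <;> simp [h']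
      linarith
end

section
/- Envy-freeness gives no proportionality guarantee when some resource has capacity 1: for any T > 0, in the instance with resources of capacities c_1 = 1, c_2 = 3 and 4 agents where agent 1 has value 0 for both resources, external value T for agent 4 and 0 for agents 2,3, and agents 2,3,4 have all values 0, the assignment putting agent 4 on resource 1 and agents 1,2,3 on resource 2 is envy-free, yet u_1 = 0 while PROP_1 = T/3 > 0. -/
open Finset

theorem ef_without_prop_guarantee (T : ℝ) (hT : 0 < T)
    (v : Fin 4 → Fin 2 → ℝ) (e : Fin 4 → Fin 4 → ℝ) (X : Fin 4 → Fin 2)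
    (hv : ∀ i j, v i j = 0)
    (he : ∀ i j, e i j = if i = 0 ∧ j = 3 then T else 0)
    (hX : ∀ a, X a = if a = 3 then 0 else 1) :
    EF v e X ∧ util v e X 0 = 0 ∧ propShare v e 0 = T / 3 ∧ 0 < propShare v e 0 := by
  have key : ∀ (Y : Fin 4 → Fin 2) (i : Fin 4), eVal e Y i = if i = 0 ∧ Y 3 = Y 0 then T else 0 := by
    intro Y i
    simp only [eVal, Finset.sum_filter, he, Fin.sum_univ_four]
    fin_cases i <;> by_cases h : Y 3 = Y 0 <;> simp_all
  constructor
  · intro i j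
    simp only [util, vVal, hv, zero_add, key, swapA]
    fin_cases i <;> fin_cases j <;> simp [hX, Equiv.swap_apply_def]
  refine ⟨?_, ?_, ?_⟩
  · simp [util, vVal, hv, key, hX]
  · simp [propShare, hv, he, Fin.sum_univ_four, Fin.sum_univ_two]
    ring
  · simp [propShare, hv, he, Fin.sum_univ_four, Fin.sum_univ_two]
    positivity
end
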